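/- arXiv:1902.09012 — 4 statements merged into one kernel-verified Lean document; each statement's English description precedes it below -/
import Mathlib

section
/- (Finite symmetry generated by Z(h).) Let h : ℝ → ℝ be smooth and ε ∈ ℝ. Suppose the pair (ψ, w) solves DS. Then the pair (ψ̃, w̃) defined by ψ̃(t,x,y,z) = exp(i·(ε·h'(t)·y/(2a₁) − ε²·h(t)·h'(t)/(4a₁))) · ψ(t, x, y − ε·h(t), z) and w̃(t,x,y,z) = w(t, x, y − ε·h(t), z) − ε·h''(t)·y/(2a₁) + ε²·h(t)·h''(t)/(4a₁) also solves DS. -/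
set_option maxHeartbeats 1000000

noncomputable section

open Complex

lemma cd_diff {E F : Type*} [NormedAddCommGroup E] [NormedSpace ℝ E]
    [NormedAddCommGroup F] [NormedSpace ℝ F] {f : E → F}
    (hf : ContDiff ℝ (⊤ : ℕ∞) f) : Differentiable ℝ f :=
  hf.differentiable (by simp)

lemma cd_deriv {f : ℝ → ℂ} (hf : ContDiff ℝ (⊤ : ℕ∞) f) :
    ContDiff ℝ (⊤ : ℕ∞) (deriv f) := (contDiff_infty_iff_deriv.mp hf).2

lemma hasDerivAt_comp4 {G : Type*} [NormedAddCommGroup G] [NormedSpace ℝ G]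
    (F : ℝ × ℝ × ℝ × ℝ → G) (hF : ContDiff ℝ (⊤ : ℕ∞) F)
    {q₁ q₂ q₃ q₄ : ℝ → ℝ} {d₁ d₂ d₃ d₄ : ℝ} (s : ℝ)
    (h₁ : HasDerivAt q₁ d₁ s) (h₂ : HasDerivAt q₂ d₂ s)
    (h₃ : HasDerivAt q₃ d₃ s) (h₄ : HasDerivAt q₄ d₄ s) :
    HasDerivAt (fun u => F (q₁ u, q₂ u, q₃ u, q₄ u))
      (fderiv ℝ F (q₁ s, q₂ s, q₃ s, q₄ s) (d₁, d₂, d₃, d₄)) s := by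
  have hg : HasDerivAt (fun u => ((q₁ u, q₂ u, q₃ u, q₄ u) : ℝ×ℝ×ℝ×ℝ)) (d₁,d₂,d₃,d₄) s :=
    h₁.prodMk (h₂.prodMk (h₃.prodMk h₄))
  exact ((cd_diff hF _).hasFDerivAt).comp_hasDerivAt s hg

lemma slice_y {G : Type*} [NormedAddCommGroup G] [NormedSpace ℝ G]
    {F : ℝ × ℝ × ℝ × ℝ → G} (hF : ContDiff ℝ (⊤ : ℕ∞) F) (t x z : ℝ) :
    ContDiff ℝ (⊤ : ℕ∞) (fun y' => F (t, x, y', z)) :=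
  hF.comp (contDiff_const.prodMk (contDiff_const.prodMk (contDiff_id.prodMk contDiff_const)))

def F4 (ψ : ℝ → ℝ → ℝ → ℝ → ℂ) : ℝ × ℝ × ℝ × ℝ → ℂ := fun p => ψ p.1 p.2.1 p.2.2.1 p.2.2.2




/-- `ψ : ℝ⁴ → ℂ` (curried as a function of `t x y z`) is smooth. -/
def SmoothC (ψ : ℝ → ℝ → ℝ → ℝ → ℂ) : Prop :=
  ContDiff ℝ (⊤ : ℕ∞) fun p : ℝ × ℝ × ℝ × ℝ => ψ p.1 p.2.1 p.2.2.1 p.2.2.2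

/-- `w : ℝ⁴ → ℝ` (curried as a function of `t x y z`) is smooth. -/
def SmoothR (w : ℝ → ℝ → ℝ → ℝ → ℝ) : Prop :=
  ContDiff ℝ (⊤ : ℕ∞) fun p : ℝ × ℝ × ℝ × ℝ => w p.1 p.2.1 p.2.2.1 p.2.2.2

/-- The pair `(ψ, w)` satisfies both equations of the (3+1)-dimensional
Davey–Stewartson system
`i·ψ_t + ψ_xx + a₁ψ_yy + ψ_zz = a₂|ψ|²ψ + ψw`,
`w_xx + b₁w_yy + w_zz = b₂(|ψ|²)_yy`
at the point `(t,x,y,z)`. -/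
def SolvesDSAt (a₁ a₂ b₁ b₂ : ℝ) (ψ : ℝ → ℝ → ℝ → ℝ → ℂ) (w : ℝ → ℝ → ℝ → ℝ → ℝ)
    (t x y z : ℝ) : Prop :=
  (Complex.I * deriv (fun t' => ψ t' x y z) t
      + deriv (deriv (fun x' => ψ t x' y z)) x
      + (a₁ : ℂ) * deriv (deriv (fun y' => ψ t x y' z)) y
      + deriv (deriv (fun z' => ψ t x y z')) z
    = (a₂ : ℂ) * (‖ψ t x y z‖ : ℂ) ^ 2 * ψ t x y z
      + ψ t x y z * (w t x y z : ℂ)) ∧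
  (deriv (deriv (fun x' => w t x' y z)) x
      + b₁ * deriv (deriv (fun y' => w t x y' z)) y
      + deriv (deriv (fun z' => w t x y z')) z
    = b₂ * deriv (deriv (fun y' => ‖ψ t x y' z‖ ^ 2)) y)

/-- The pair `(ψ, w)` solves the (3+1)-dimensional Davey–Stewartson system
at every point of `ℝ⁴`. -/
def SolvesDS (a₁ a₂ b₁ b₂ : ℝ) (ψ : ℝ → ℝ → ℝ → ℝ → ℂ) (w : ℝ → ℝ → ℝ → ℝ → ℝ) : Prop :=
  ∀ t x y z : ℝ, SolvesDSAt a₁ a₂ b₁ b₂ ψ w t x y z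

/-- Finite symmetry generated by `Z(h)`. -/
theorem stmt13 (a₁ a₂ b₁ b₂ : ℝ) (ha₁ : a₁ ≠ 0) (ha₂ : a₂ ≠ 0) (hb₁ : b₁ ≠ 0) (hb₂ : b₂ ≠ 0)
    (ψ : ℝ → ℝ → ℝ → ℝ → ℂ) (w : ℝ → ℝ → ℝ → ℝ → ℝ)
    (hψ : SmoothC ψ) (hw : SmoothR w)
    (hsol : SolvesDS a₁ a₂ b₁ b₂ ψ w)
    (h : ℝ → ℝ) (hh : ContDiff ℝ (⊤ : ℕ∞) h) (ε : ℝ) :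
    SolvesDS a₁ a₂ b₁ b₂
      (fun t x y z =>
        Complex.exp (Complex.I *
            ((ε * deriv h t * y / (2 * a₁) - ε ^ 2 * h t * deriv h t / (4 * a₁) : ℝ) : ℂ)) *
          ψ t x (y - ε * h t) z)
      (fun t x y z =>
        w t x (y - ε * h t) z - ε * deriv (deriv h) t * y / (2 * a₁)
          + ε ^ 2 * h t * deriv (deriv h) t / (4 * a₁)) := by
  intro t x y z
  have hψ' : ContDiff ℝ (⊤ : ℕ∞) (F4 ψ) := hψ
  have hw' : ContDiff ℝ (⊤ : ℕ∞) fun p : ℝ × ℝ × ℝ × ℝ => w p.1 p.2.1 p.2.2.1 p.2.2.2 := hw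
  have horig := (hsol t x (y - ε * h t) z).1
  have horig2 := (hsol t x (y - ε * h t) z).2
  unfold SolvesDSAt
  beta_reduce
  refine ⟨?_, ?_⟩
  · -- first equation
    have ha₁' : (a₁ : ℂ) ≠ 0 := by exact_mod_cast ha₁
    have hPs : ContDiff ℝ (⊤ : ℕ∞) (fun u => ψ t x u z) := slice_y hψ' t x z
    have hPs' : ContDiff ℝ (⊤ : ℕ∞) (deriv (fun u => ψ t x u z)) := cd_deriv hPs
    have hht : ∀ s, HasDerivAt h (deriv h s) s := fun s => (cd_diff hh s).hasDerivAt
    have hh2 : ∀ s, HasDerivAt (deriv h) (deriv (deriv h) s) s :=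
      fun s => (cd_diff ((contDiff_infty_iff_deriv.mp hh).2) s).hasDerivAt
    -- x slice
    have hX : deriv (deriv fun x' =>
          cexp (Complex.I * ((ε * deriv h t * y / (2 * a₁) - ε ^ 2 * h t * deriv h t / (4 * a₁) : ℝ) : ℂ)) *
            ψ t x' (y - ε * h t) z) x
        = cexp (Complex.I * ((ε * deriv h t * y / (2 * a₁) - ε ^ 2 * h t * deriv h t / (4 * a₁) : ℝ) : ℂ)) *
          deriv (deriv fun x' => ψ t x' (y - ε * h t) z) x := by
      rw [show (deriv fun x' =>
          cexp (Complex.I * ((ε * deriv h t * y / (2 * a₁) - ε ^ 2 * h t * deriv h t / (4 * a₁) : ℝ) : ℂ)) *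
            ψ t x' (y - ε * h t) z)
        = fun u => cexp (Complex.I * ((ε * deriv h t * y / (2 * a₁) - ε ^ 2 * h t * deriv h t / (4 * a₁) : ℝ) : ℂ)) *
            deriv (fun x' => ψ t x' (y - ε * h t) z) u from funext fun u => deriv_const_mul_field _,
        deriv_const_mul_field]
    -- z slice
    have hZ : deriv (deriv fun z' =>
          cexp (Complex.I * ((ε * deriv h t * y / (2 * a₁) - ε ^ 2 * h t * deriv h t / (4 * a₁) : ℝ) : ℂ)) *
            ψ t x (y - ε * h t) z') z
        = cexp (Complex.I * ((ε * deriv h t * y / (2 * a₁) - ε ^ 2 * h t * deriv h t / (4 * a₁) : ℝ) : ℂ)) *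
          deriv (deriv fun z' => ψ t x (y - ε * h t) z') z := by
      rw [show (deriv fun z' =>
          cexp (Complex.I * ((ε * deriv h t * y / (2 * a₁) - ε ^ 2 * h t * deriv h t / (4 * a₁) : ℝ) : ℂ)) *
            ψ t x (y - ε * h t) z')
        = fun u => cexp (Complex.I * ((ε * deriv h t * y / (2 * a₁) - ε ^ 2 * h t * deriv h t / (4 * a₁) : ℝ) : ℂ)) *
            deriv (fun z' => ψ t x (y - ε * h t) z') u from funext fun u => deriv_const_mul_field _,
        deriv_const_mul_field]
    -- exp slice in y
    have hexp : ∀ v : ℝ, HasDerivAt (fun y' =>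
        cexp (Complex.I * ((ε * deriv h t * y' / (2 * a₁) - ε ^ 2 * h t * deriv h t / (4 * a₁) : ℝ) : ℂ)))
        (cexp (Complex.I * ((ε * deriv h t * v / (2 * a₁) - ε ^ 2 * h t * deriv h t / (4 * a₁) : ℝ) : ℂ)) *
          (Complex.I * ((ε * deriv h t * 1 / (2 * a₁) : ℝ) : ℂ))) v := by
      intro v
      have hl : HasDerivAt (fun y' => ε * deriv h t * y' / (2 * a₁) - ε ^ 2 * h t * deriv h t / (4 * a₁))
          (ε * deriv h t * 1 / (2 * a₁)) v :=
        (((hasDerivAt_id v).const_mul (ε * deriv h t)).div_const (2 * a₁)).sub_const _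
      exact (hl.ofReal_comp.const_mul Complex.I).cexp
    -- psi shifted slice in y
    have hpsi : ∀ v : ℝ, HasDerivAt (fun y' => ψ t x (y' - ε * h t) z)
        (deriv (fun s => ψ t x s z) (v - ε * h t)) v := fun v => by
      simpa [Function.comp_def] using HasDerivAt.scomp (g₁ := fun u => ψ t x u z) (h := fun y' => y' - ε * h t) v
        ((cd_diff hPs (v - ε * h t)).hasDerivAt) ((hasDerivAt_id' v).sub_const _)
    have hpsi2 : HasDerivAt (fun v => deriv (fun s => ψ t x s z) (v - ε * h t))
        (deriv (deriv (fun s => ψ t x s z)) (y - ε * h t)) y := by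
      simpa [Function.comp_def] using HasDerivAt.scomp (g₁ := deriv (fun u => ψ t x u z)) (h := fun y' => y' - ε * h t) y
        ((cd_diff hPs' (y - ε * h t)).hasDerivAt) ((hasDerivAt_id' y).sub_const _)
    -- y slice first derivative (cleaned)
    have hyd : (deriv fun y' =>
          cexp (Complex.I * ((ε * deriv h t * y' / (2 * a₁) - ε ^ 2 * h t * deriv h t / (4 * a₁) : ℝ) : ℂ)) *
            ψ t x (y' - ε * h t) z)
        = fun v => cexp (Complex.I * ((ε * deriv h t * v / (2 * a₁) - ε ^ 2 * h t * deriv h t / (4 * a₁) : ℝ) : ℂ)) *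
            ((Complex.I * ((ε * deriv h t * 1 / (2 * a₁) : ℝ) : ℂ)) * ψ t x (v - ε * h t) z
              + deriv (fun s => ψ t x s z) (v - ε * h t)) := by
      funext v
      exact (((hexp v).mul (hpsi v)).deriv).trans (by ring)
    -- y slice second derivative
    have hY : deriv (deriv fun y' =>
          cexp (Complex.I * ((ε * deriv h t * y' / (2 * a₁) - ε ^ 2 * h t * deriv h t / (4 * a₁) : ℝ) : ℂ)) *
            ψ t x (y' - ε * h t) z) y
        = cexp (Complex.I * ((ε * deriv h t * y / (2 * a₁) - ε ^ 2 * h t * deriv h t / (4 * a₁) : ℝ) : ℂ)) *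
            (Complex.I * ((ε * deriv h t * 1 / (2 * a₁) : ℝ) : ℂ)) *
            ((Complex.I * ((ε * deriv h t * 1 / (2 * a₁) : ℝ) : ℂ)) * ψ t x (y - ε * h t) z
              + deriv (fun s => ψ t x s z) (y - ε * h t))
          + cexp (Complex.I * ((ε * deriv h t * y / (2 * a₁) - ε ^ 2 * h t * deriv h t / (4 * a₁) : ℝ) : ℂ)) *
            ((Complex.I * ((ε * deriv h t * 1 / (2 * a₁) : ℝ) : ℂ)) * deriv (fun s => ψ t x s z) (y - ε * h t)
              + deriv (deriv (fun s => ψ t x s z)) (y - ε * h t)) := by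
      rw [hyd]
      exact ((hexp y).mul (((hpsi y).const_mul _).add hpsi2)).deriv
    -- t derivative
    have hθ : HasDerivAt (fun t' => ε * deriv h t' * y / (2 * a₁) - ε ^ 2 * h t' * deriv h t' / (4 * a₁))
        (ε * deriv (deriv h) t * y / (2 * a₁)
          - (ε ^ 2 * deriv h t * deriv h t + ε ^ 2 * h t * deriv (deriv h) t) / (4 * a₁)) t := by
      have p1 : HasDerivAt (fun t' => ε * deriv h t' * y / (2 * a₁)) (ε * deriv (deriv h) t * y / (2 * a₁)) t :=
        (((hh2 t).const_mul ε).mul_const y).div_const _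
      have p2 : HasDerivAt (fun t' => ε ^ 2 * h t' * deriv h t' / (4 * a₁))
          ((ε ^ 2 * deriv h t * deriv h t + ε ^ 2 * h t * deriv (deriv h) t) / (4 * a₁)) t := by
        exact (((hht t).const_mul (ε ^ 2)).mul (hh2 t)).div_const (4 * a₁)
      exact p1.sub p2
    have hexpT : HasDerivAt (fun t' =>
        cexp (Complex.I * ((ε * deriv h t' * y / (2 * a₁) - ε ^ 2 * h t' * deriv h t' / (4 * a₁) : ℝ) : ℂ)))
        (cexp (Complex.I * ((ε * deriv h t * y / (2 * a₁) - ε ^ 2 * h t * deriv h t / (4 * a₁) : ℝ) : ℂ)) * (Complex.I * ((ε * deriv (deriv h) t * y / (2 * a₁) - (ε ^ 2 * deriv h t * deriv h t + ε ^ 2 * h t * deriv (deriv h) t) / (4 * a₁) : ℝ) : ℂ))) t :=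
      (hθ.ofReal_comp.const_mul Complex.I).cexp
    have hq3 : HasDerivAt (fun t' => y - ε * h t') (-(ε * deriv h t)) t := ((hht t).const_mul ε).const_sub y
    have hpsiT : HasDerivAt (fun t' => ψ t' x (y - ε * h t') z)
        (fderiv ℝ (F4 ψ) (t, x, y - ε * h t, z) (1, 0, -(ε * deriv h t), 0)) t :=
      hasDerivAt_comp4 (F4 ψ) hψ' t (hasDerivAt_id t) (hasDerivAt_const t x) hq3 (hasDerivAt_const t z)
    have pdt : fderiv ℝ (F4 ψ) (t, x, y - ε * h t, z) ((1:ℝ), (0:ℝ), (0:ℝ), (0:ℝ))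
        = deriv (fun t' => ψ t' x (y - ε * h t) z) t :=
      (hasDerivAt_comp4 (F4 ψ) hψ' t (hasDerivAt_id t) (hasDerivAt_const t x)
        (hasDerivAt_const t (y - ε * h t)) (hasDerivAt_const t z)).deriv.symm
    have pdy : fderiv ℝ (F4 ψ) (t, x, y - ε * h t, z) ((0:ℝ), (0:ℝ), (1:ℝ), (0:ℝ))
        = deriv (fun s => ψ t x s z) (y - ε * h t) :=
      (hasDerivAt_comp4 (F4 ψ) hψ' (y - ε * h t) (hasDerivAt_const _ t) (hasDerivAt_const _ x)
        (hasDerivAt_id _) (hasDerivAt_const _ z)).deriv.symm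
    have hvec : ((1:ℝ), (0:ℝ), -(ε * deriv h t), (0:ℝ))
        = ((1:ℝ), (0:ℝ), (0:ℝ), (0:ℝ)) + (-(ε * deriv h t)) • ((0:ℝ), (0:ℝ), (1:ℝ), (0:ℝ)) := by
      simp [Prod.ext_iff]
    have hpsiT' : HasDerivAt (fun t' => ψ t' x (y - ε * h t') z)
        (deriv (fun t' => ψ t' x (y - ε * h t) z) t
          - ((ε * deriv h t : ℝ) : ℂ) * deriv (fun s => ψ t x s z) (y - ε * h t)) t := by
      have hval : fderiv ℝ (F4 ψ) (t, x, y - ε * h t, z) ((1:ℝ), (0:ℝ), -(ε * deriv h t), (0:ℝ))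
          = deriv (fun t' => ψ t' x (y - ε * h t) z) t
            - ((ε * deriv h t : ℝ) : ℂ) * deriv (fun s => ψ t x s z) (y - ε * h t) := by
        rw [hvec, map_add, map_smul, pdt, pdy, Complex.real_smul]
        push_cast
        ring
      exact hval ▸ hpsiT
    have hT : deriv (fun t' =>
        cexp (Complex.I * ((ε * deriv h t' * y / (2 * a₁) - ε ^ 2 * h t' * deriv h t' / (4 * a₁) : ℝ) : ℂ)) *
          ψ t' x (y - ε * h t') z) t
        = cexp (Complex.I * ((ε * deriv h t * y / (2 * a₁) - ε ^ 2 * h t * deriv h t / (4 * a₁) : ℝ) : ℂ)) * (Complex.I * ((ε * deriv (deriv h) t * y / (2 * a₁) - (ε ^ 2 * deriv h t * deriv h t + ε ^ 2 * h t * deriv (deriv h) t) / (4 * a₁) : ℝ) : ℂ)) * ψ t x (y - ε * h t) z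
          + cexp (Complex.I * ((ε * deriv h t * y / (2 * a₁) - ε ^ 2 * h t * deriv h t / (4 * a₁) : ℝ) : ℂ)) * (deriv (fun t' => ψ t' x (y - ε * h t) z) t
              - ((ε * deriv h t : ℝ) : ℂ) * deriv (fun s => ψ t x s z) (y - ε * h t)) :=
      (hexpT.mul hpsiT').deriv
    have habs : ‖(cexp (Complex.I * ((ε * deriv h t * y / (2 * a₁) - ε ^ 2 * h t * deriv h t / (4 * a₁) : ℝ) : ℂ)) * ψ t x (y - ε * h t) z)‖ = ‖(ψ t x (y - ε * h t) z)‖ := by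
      rw [norm_mul, mul_comm Complex.I, Complex.norm_exp_ofReal_mul_I, one_mul]
    rw [hX, hZ, hY, hT, habs]
    have hinv : (a₁ : ℂ) * ((a₁ : ℂ))⁻¹ = 1 := mul_inv_cancel₀ ha₁'
    have hid : (a₁ : ℂ) * (((ε * deriv h t * 1 / (2 * a₁) : ℝ) : ℂ)) ^ 2
        = ((ε ^ 2 * deriv h t * deriv h t / (4 * a₁) : ℝ) : ℂ) := by
      push_cast
      field_simp
      ring
    linear_combination (norm := (push_cast; ring1))
      cexp (Complex.I * ((ε * deriv h t * y / (2 * a₁) - ε ^ 2 * h t * deriv h t / (4 * a₁) : ℝ) : ℂ)) * horig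
      + cexp (Complex.I * ((ε * deriv h t * y / (2 * a₁) - ε ^ 2 * h t * deriv h t / (4 * a₁) : ℝ) : ℂ)) * ψ t x (y - ε * h t) z *
        (((ε * deriv (deriv h) t * y / (2 * a₁) - (ε ^ 2 * deriv h t * deriv h t + ε ^ 2 * h t * deriv (deriv h) t) / (4 * a₁) : ℝ) : ℂ) + (a₁ : ℂ) * (((ε * deriv h t * 1 / (2 * a₁) : ℝ) : ℂ)) ^ 2) * Complex.I_sq
      - cexp (Complex.I * ((ε * deriv h t * y / (2 * a₁) - ε ^ 2 * h t * deriv h t / (4 * a₁) : ℝ) : ℂ)) * ψ t x (y - ε * h t) z * hid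
      + (Complex.I * cexp (Complex.I * ((ε * deriv h t * y / (2 * a₁) - ε ^ 2 * h t * deriv h t / (4 * a₁) : ℝ) : ℂ)) * (ε : ℂ) * ((deriv h t : ℝ) : ℂ) *
          deriv (fun s => ψ t x s z) (y - ε * h t)) * hinv
  · -- second equation
    have hWs : ContDiff ℝ (⊤ : ℕ∞) (fun u => w t x u z) := slice_y hw' t x z
    -- x slice
    have hx : deriv (fun x' => w t x' (y - ε * h t) z - ε * deriv (deriv h) t * y / (2 * a₁)
          + ε ^ 2 * h t * deriv (deriv h) t / (4 * a₁)) = deriv (fun x' => w t x' (y - ε * h t) z) := by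
      funext u
      rw [deriv_add_const, deriv_sub_const]
    -- z slice
    have hz : deriv (fun z' => w t x (y - ε * h t) z' - ε * deriv (deriv h) t * y / (2 * a₁)
          + ε ^ 2 * h t * deriv (deriv h) t / (4 * a₁)) = deriv (fun z' => w t x (y - ε * h t) z') := by
      funext u
      rw [deriv_add_const, deriv_sub_const]
    -- y slice, first derivative
    have hy1 : ∀ u : ℝ, HasDerivAt (fun v => w t x (v - ε * h t) z - ε * deriv (deriv h) t * v / (2 * a₁)
          + ε ^ 2 * h t * deriv (deriv h) t / (4 * a₁))
        (deriv (fun s => w t x s z) (u - ε * h t) * 1 - ε * deriv (deriv h) t * 1 / (2 * a₁)) u := by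
      intro u
      have hA : HasDerivAt (fun v => w t x (v - ε * h t) z)
          (deriv (fun s => w t x s z) (u - ε * h t) * 1) u :=
        HasDerivAt.comp u ((cd_diff hWs _).hasDerivAt) ((hasDerivAt_id u).sub_const _)
      have hB : HasDerivAt (fun v => ε * deriv (deriv h) t * v / (2 * a₁))
          (ε * deriv (deriv h) t * 1 / (2 * a₁)) u :=
        ((hasDerivAt_id u).const_mul (ε * deriv (deriv h) t)).div_const _
      exact (hA.sub hB).add_const _
    have hy2 : deriv (fun v => w t x (v - ε * h t) z - ε * deriv (deriv h) t * v / (2 * a₁)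
          + ε ^ 2 * h t * deriv (deriv h) t / (4 * a₁))
        = fun u => deriv (fun s => w t x s z) (u - ε * h t) * 1 - ε * deriv (deriv h) t * 1 / (2 * a₁) :=
      funext fun u => (hy1 u).deriv
    have hy3 : deriv (fun u => deriv (fun s => w t x s z) (u - ε * h t) * 1
          - ε * deriv (deriv h) t * 1 / (2 * a₁)) y = deriv (deriv (fun s => w t x s z)) (y - ε * h t) := by
      have e1 : (fun u => deriv (fun s => w t x s z) (u - ε * h t) * 1 - ε * deriv (deriv h) t * 1 / (2 * a₁))
          = fun u => deriv (fun s => w t x s z) (u - ε * h t) - ε * deriv (deriv h) t * 1 / (2 * a₁) := by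
        funext u; ring
      rw [e1, deriv_sub_const, deriv_comp_sub_const]
    -- RHS
    have hr1 : (fun y' => ‖
          (cexp (Complex.I * (((ε * deriv h t * y' / (2 * a₁) - ε ^ 2 * h t * deriv h t / (4 * a₁)) : ℝ) : ℂ)) *
            ψ t x (y' - ε * h t) z)‖ ^ 2)
        = fun y' => ‖(ψ t x (y' - ε * h t) z)‖ ^ 2 := by
      funext u
      rw [norm_mul, mul_comm Complex.I, Complex.norm_exp_ofReal_mul_I, one_mul]
    have hr2 : deriv (fun y' => ‖ψ t x (y' - ε * h t) z‖ ^ 2)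
        = fun y' => deriv (fun s => ‖ψ t x s z‖ ^ 2) (y' - ε * h t) :=
      funext fun u => deriv_comp_sub_const (fun s => ‖ψ t x s z‖ ^ 2) (ε * h t) u
    rw [hx, hz, hy2, hy3, hr1, hr2, deriv_comp_sub_const (deriv fun s => ‖ψ t x s z‖ ^ 2) (ε * h t) y]
    exact horig2

end
end

section
/- (Finite gauge symmetry generated by W(m).) Let m : ℝ → ℝ be smooth and ε ∈ ℝ. Suppose the pair (ψ, w) solves DS. Then the pair (ψ̃, w̃) defined by ψ̃(t,x,y,z) = exp(−i·ε·m(t)) · ψ(t,x,y,z) and w̃(t,x,y,z) = w(t,x,y,z) + ε·m'(t) also solves DS. -/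
noncomputable section

/-- Finite gauge symmetry generated by `W(m)`. -/
theorem stmt15 (a₁ a₂ b₁ b₂ : ℝ) (ha₁ : a₁ ≠ 0) (ha₂ : a₂ ≠ 0) (hb₁ : b₁ ≠ 0) (hb₂ : b₂ ≠ 0)
    (ψ : ℝ → ℝ → ℝ → ℝ → ℂ) (w : ℝ → ℝ → ℝ → ℝ → ℝ)
    (hψ : SmoothC ψ) (hw : SmoothR w)
    (hsol : SolvesDS a₁ a₂ b₁ b₂ ψ w)
    (m : ℝ → ℝ) (hm : ContDiff ℝ (⊤ : ℕ∞) m) (ε : ℝ) :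
    SolvesDS a₁ a₂ b₁ b₂
      (fun t x y z => Complex.exp (-Complex.I * ((ε * m t : ℝ) : ℂ)) * ψ t x y z)
      (fun t x y z => w t x y z + ε * deriv m t) := by
  intro t x y z
  obtain ⟨h1, h2⟩ := hsol t x y z
  set c : ℝ → ℂ := fun t' => Complex.exp (-Complex.I * ((ε * m t' : ℝ) : ℂ)) with hc
  -- derivative of the phase factor
  have hmd : HasDerivAt m (deriv m t) t := (hm.differentiable (by simp) t).hasDerivAt
  have hcd : HasDerivAt c (-Complex.I * (ε * deriv m t) * c t) t := by
    have h0 : HasDerivAt (fun t' => ((ε * m t' : ℝ) : ℂ)) ((ε * deriv m t : ℝ) : ℂ) t := by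
      exact ((hmd.const_mul ε).ofReal_comp)
    have h1 : HasDerivAt (fun t' => -Complex.I * ((ε * m t' : ℝ) : ℂ))
        (-Complex.I * ((ε * deriv m t : ℝ) : ℂ)) t := h0.const_mul _
    have := h1.cexp
    convert this using 1
    simp only [hc]
    push_cast
    ring
  -- differentiability of ψ in t
  have hψt : HasDerivAt (fun t' => ψ t' x y z) (deriv (fun t' => ψ t' x y z) t) t := by
    have : DifferentiableAt ℝ (fun t' => ψ t' x y z) t := by
      have hψd := hψ.differentiable (by simp)
      exact (hψd.comp (Differentiable.prodMk differentiable_id (differentiable_const (x, y, z)))) t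
    exact this.hasDerivAt
  have hprod : deriv (fun t' => c t' * ψ t' x y z) t =
      -Complex.I * (ε * deriv m t) * c t * ψ t x y z
        + c t * deriv (fun t' => ψ t' x y z) t := (hcd.mul hψt).deriv
  -- spatial second derivatives: pull out constant
  have pull : ∀ f : ℝ → ℂ, ∀ u : ℝ,
      deriv (deriv (fun s => c t * f s)) u = c t * deriv (deriv f) u := by
    intro f u
    have : deriv (fun s => c t * f s) = fun s => c t * deriv f s := by
      funext s; exact deriv_const_mul_field _
    rw [this, deriv_const_mul_field]
  -- moduli agree
  have habs : ∀ t' x' y' z' : ℝ,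
      ‖c t' * ψ t' x' y' z'‖ = ‖ψ t' x' y' z'‖ := by
    intro t' x' y' z'
    rw [norm_mul, Complex.norm_exp]
    simp
  constructor
  · simp only
    rw [hprod, pull, pull, pull, habs]
    push_cast
    have := h1
    -- multiply the original equation by c t
    calc Complex.I * (-Complex.I * (ε * deriv m t) * c t * ψ t x y z
            + c t * deriv (fun t' => ψ t' x y z) t)
          + c t * deriv (deriv (fun x' => ψ t x' y z)) x
          + (a₁ : ℂ) * (c t * deriv (deriv (fun y' => ψ t x y' z)) y)
          + c t * deriv (deriv (fun z' => ψ t x y z')) z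
        = c t * (Complex.I * deriv (fun t' => ψ t' x y z) t
            + deriv (deriv (fun x' => ψ t x' y z)) x
            + (a₁ : ℂ) * deriv (deriv (fun y' => ψ t x y' z)) y
            + deriv (deriv (fun z' => ψ t x y z')) z)
          + (ε * deriv m t : ℝ) * (c t * ψ t x y z) := by
          simp only [Complex.ofReal_mul]
          ring_nf
          rw [Complex.I_sq]
          ring
      _ = _ := by
          rw [h1]; simp only [hc]; push_cast; ring
  · simp only
    have pw : ∀ f : ℝ → ℝ, ∀ u : ℝ,
        deriv (deriv (fun s => f s + ε * deriv m t)) u = deriv (deriv f) u := by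
      intro f u
      have : deriv (fun s => f s + ε * deriv m t) = deriv f := by
        funext s; exact deriv_add_const _
      rw [this]
    rw [pw, pw, pw]
    have : (fun y' => ‖c t * ψ t x y' z‖ ^ 2)
        = fun y' => ‖ψ t x y' z‖ ^ 2 := by
      funext y'; rw [habs]
    rw [this]
    exact h2

end
end

section
/- (Reduction to ODEs via the subalgebra {X₁, X₂, X₃}.) Let F, G, M : (0,∞) → ℝ be smooth functions satisfying, for all s > 0, the reduced system: (a) 4s(1+a₁s)(F''(s) − F(s)G'(s)²) + 2(2+5a₁s)F'(s) + 2a₁F(s) = a₂F(s)³ + M(s)F(s); (b) 2s(1+a₁s)F(s)G''(s) + 4s(1+a₁s)F'(s)G'(s) + (2+5a₁s)F(s)G'(s) = 0; (c) s(1+b₁s)M''(s) + (1 + (7/2)b₁s)M'(s) + (3/2)b₁M(s) = 2b₂s²(F(s)F''(s) + F'(s)²) + 7b₂sF(s)F'(s) + (3/2)b₂F(s)². Then the pair defined on the open set { (t,x,y,z) : y > 0, x² + z² > 0 } by ψ(t,x,y,z) = (1/y)·F(s)·exp(i·G(s)) and w(t,x,y,z) = (1/y²)·M(s), where s = (x²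 + z²)/y², satisfies both DS equations at every point of that set. -/
open Filter Set

noncomputable section

namespace Stmt16Aux

lemma derivsmooth {E : Type*} [NormedAddCommGroup E] [NormedSpace ℝ E] {H : ℝ → E}
    (hH : ContDiffOn ℝ (⊤:ℕ∞) H (Set.Ioi 0)) :
    ContDiffOn ℝ (⊤:ℕ∞) (deriv H) (Set.Ioi 0) :=
  hH.deriv_of_isOpen isOpen_Ioi (by exact_mod_cast le_top)

lemma hasDerivAt_of_cd {E : Type*} [NormedAddCommGroup E] [NormedSpace ℝ E] {H : ℝ → E}
    (hH : ContDiffOn ℝ (⊤:ℕ∞) H (Set.Ioi 0)) {σ : ℝ} (hσ : 0 < σ) :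
    HasDerivAt H (deriv H σ) σ :=
  ((hH.contDiffAt (Ioi_mem_nhds hσ)).differentiableAt (by simp)).hasDerivAt

lemma comp_hasDerivAt {E : Type*} [NormedAddCommGroup E] [NormedSpace ℝ E] {H : ℝ → E}
    (hH : ContDiffOn ℝ (⊤:ℕ∞) H (Set.Ioi 0)) {u : ℝ → ℝ} {U1 x : ℝ}
    (hu : HasDerivAt u U1 x) (hx : 0 < u x) :
    HasDerivAt (fun t => H (u t)) (U1 • deriv H (u x)) x :=
  (hasDerivAt_of_cd hH hx).scomp x hu

lemma deriv2_comp {E : Type*} [NormedAddCommGroup E] [NormedSpace ℝ E]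
    {H : ℝ → E} (hH : ContDiffOn ℝ (⊤:ℕ∞) H (Set.Ioi 0))
    (u U1 A A1 : ℝ → ℝ) (x u2 a2 : ℝ)
    (hev : ∀ᶠ x' in nhds x, HasDerivAt u (U1 x') x' ∧ HasDerivAt A (A1 x') x' ∧ 0 < u x')
    (hU1 : HasDerivAt U1 u2 x) (hA1 : HasDerivAt A1 a2 x) :
    deriv (deriv (fun x' => A x' • H (u x'))) x
      = a2 • H (u x) + (2 * (A1 x * U1 x) + A x * u2) • deriv H (u x)
        + (A x * (U1 x * U1 x)) • deriv (deriv H) (u x) := by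
  obtain ⟨hu, hA, hpos⟩ := hev.self_of_nhds
  have hH1 := derivsmooth hH
  have hD : deriv (fun x' => A x' • H (u x')) =ᶠ[nhds x]
      fun x' => A1 x' • H (u x') + (A x' * U1 x') • deriv H (u x') := by
    filter_upwards [hev] with x' hx'
    obtain ⟨hu', hA', hpos'⟩ := hx'
    rw [(show HasDerivAt (fun x' => A x' • H (u x')) _ x' from
      hA'.smul (comp_hasDerivAt hH hu' hpos')).deriv]
    module
  rw [hD.deriv_eq,
    (show HasDerivAt (fun x' => A1 x' • H (u x') + (A x' * U1 x') • deriv H (u x')) _ x from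
      (hA1.smul (comp_hasDerivAt hH hu hpos)).add
      ((hA.mul hU1).smul (comp_hasDerivAt hH1 hu hpos))).deriv]
  simp only [Pi.mul_apply]
  module

lemma hasDerivAt_div1 (c : ℝ) {y : ℝ} (hy : y ≠ 0) :
    HasDerivAt (fun t => c / t) (-c / y ^ 2) y := by
  have h : HasDerivAt (fun t => c / t) _ y := (hasDerivAt_const y c).div (hasDerivAt_id y) hy
  convert h using 1
  field_simp
  ring

lemma hasDerivAt_div2 (c : ℝ) {y : ℝ} (hy : y ≠ 0) :
    HasDerivAt (fun t => c / t ^ 2) (-(2 * c) / y ^ 3) y := by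
  have h : HasDerivAt (fun t => c / t ^ 2) _ y := (hasDerivAt_const y c).div (hasDerivAt_pow 2 y) (pow_ne_zero 2 hy)
  convert h using 1
  field_simp
  ring

lemma hasDerivAt_div3 (c : ℝ) {y : ℝ} (hy : y ≠ 0) :
    HasDerivAt (fun t => c / t ^ 3) (-(3 * c) / y ^ 4) y := by
  have h : HasDerivAt (fun t => c / t ^ 3) _ y := (hasDerivAt_const y c).div (hasDerivAt_pow 3 y) (pow_ne_zero 3 hy)
  convert h using 1
  field_simp
  ring

lemma abs_sq_aux (r g : ℝ) : ‖(r:ℂ) * Complex.exp (Complex.I * (g:ℂ))‖ ^ 2 = r ^ 2 := by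
  rw [norm_mul, mul_pow, Complex.norm_real, Complex.norm_exp]
  simp [Complex.mul_re, sq_abs]

variable {F G : ℝ → ℝ}

lemma Hc_smooth (hF : ContDiffOn ℝ (⊤:ℕ∞) F (Set.Ioi 0)) (hG : ContDiffOn ℝ (⊤:ℕ∞) G (Set.Ioi 0)) :
    ContDiffOn ℝ (⊤:ℕ∞) (fun σ => (F σ : ℂ) * Complex.exp (Complex.I * (G σ : ℂ))) (Set.Ioi 0) := by
  have h1 : ContDiffOn ℝ (⊤:ℕ∞) (fun σ => (F σ : ℂ)) (Set.Ioi 0) :=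
    Complex.ofRealCLM.contDiff.comp_contDiffOn hF
  have h2 : ContDiffOn ℝ (⊤:ℕ∞) (fun σ => (G σ : ℂ)) (Set.Ioi 0) :=
    Complex.ofRealCLM.contDiff.comp_contDiffOn hG
  exact h1.mul (((Complex.contDiff_exp (𝕜 := ℂ)).restrict_scalars ℝ).comp_contDiffOn
    (contDiffOn_const.mul h2))

lemma Hc_hasDerivAt (hF : ContDiffOn ℝ (⊤:ℕ∞) F (Set.Ioi 0))
    (hG : ContDiffOn ℝ (⊤:ℕ∞) G (Set.Ioi 0)) {σ : ℝ} (hσ : 0 < σ) :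
    HasDerivAt (fun τ => (F τ : ℂ) * Complex.exp (Complex.I * (G τ : ℂ)))
      ((((deriv F σ : ℝ) : ℂ) + Complex.I * (F σ : ℂ) * ((deriv G σ : ℝ) : ℂ))
        * Complex.exp (Complex.I * (G σ : ℂ))) σ := by
  have hF' : HasDerivAt F (deriv F σ) σ := hasDerivAt_of_cd hF hσ
  have hG' : HasDerivAt G (deriv G σ) σ := hasDerivAt_of_cd hG hσ
  have h : HasDerivAt (fun τ => (F τ : ℂ) * Complex.exp (Complex.I * (G τ : ℂ))) _ σ :=
    hF'.ofReal_comp.mul ((hG'.ofReal_comp.const_mul Complex.I).cexp)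
  convert h using 1
  ring

lemma Hc_deriv (hF : ContDiffOn ℝ (⊤:ℕ∞) F (Set.Ioi 0))
    (hG : ContDiffOn ℝ (⊤:ℕ∞) G (Set.Ioi 0)) {σ : ℝ} (hσ : 0 < σ) :
    deriv (fun τ => (F τ : ℂ) * Complex.exp (Complex.I * (G τ : ℂ))) σ
      = (((deriv F σ : ℝ) : ℂ) + Complex.I * (F σ : ℂ) * ((deriv G σ : ℝ) : ℂ))
        * Complex.exp (Complex.I * (G σ : ℂ)) :=
  (Hc_hasDerivAt hF hG hσ).deriv

lemma Hc_deriv2 (hF : ContDiffOn ℝ (⊤:ℕ∞) F (Set.Ioi 0))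
    (hG : ContDiffOn ℝ (⊤:ℕ∞) G (Set.Ioi 0)) {σ : ℝ} (hσ : 0 < σ) :
    deriv (deriv (fun τ => (F τ : ℂ) * Complex.exp (Complex.I * (G τ : ℂ)))) σ
      = (((deriv (deriv F) σ : ℝ) : ℂ) - (F σ : ℂ) * ((deriv G σ : ℝ) : ℂ) ^ 2
          + Complex.I * (2 * ((deriv F σ : ℝ) : ℂ) * ((deriv G σ : ℝ) : ℂ)
            + (F σ : ℂ) * ((deriv (deriv G) σ : ℝ) : ℂ)))
        * Complex.exp (Complex.I * (G σ : ℂ)) := by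
  have hev : deriv (fun τ => (F τ : ℂ) * Complex.exp (Complex.I * (G τ : ℂ)))
      =ᶠ[nhds σ] fun τ => (((deriv F τ : ℝ) : ℂ) + Complex.I * (F τ : ℂ) * ((deriv G τ : ℝ) : ℂ))
        * Complex.exp (Complex.I * (G τ : ℂ)) := by
    filter_upwards [Ioi_mem_nhds hσ] with τ hτ
    exact Hc_deriv hF hG hτ
  rw [hev.deriv_eq]
  have hF' : HasDerivAt F (deriv F σ) σ := hasDerivAt_of_cd hF hσ
  have hG' : HasDerivAt G (deriv G σ) σ := hasDerivAt_of_cd hG hσ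
  have hF1' : HasDerivAt (deriv F) (deriv (deriv F) σ) σ := hasDerivAt_of_cd (derivsmooth hF) hσ
  have hG1' : HasDerivAt (deriv G) (deriv (deriv G) σ) σ := hasDerivAt_of_cd (derivsmooth hG) hσ
  have hinner : HasDerivAt (fun τ => ((deriv F τ : ℝ) : ℂ) + Complex.I * (F τ : ℂ) * ((deriv G τ : ℝ) : ℂ)) _ σ :=
    hF1'.ofReal_comp.add ((hF'.ofReal_comp.const_mul Complex.I).mul hG1'.ofReal_comp)
  have h : HasDerivAt (fun τ => (((deriv F τ : ℝ) : ℂ) + Complex.I * (F τ : ℂ) * ((deriv G τ : ℝ) : ℂ))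
      * Complex.exp (Complex.I * (G τ : ℂ))) _ σ := hinner.mul ((hG'.ofReal_comp.const_mul Complex.I).cexp)
  rw [h.deriv]
  have hI := Complex.I_sq
  linear_combination ((F σ : ℂ) * ((deriv G σ : ℝ) : ℂ) ^ 2
    * Complex.exp (Complex.I * (G σ : ℂ))) * hI

lemma K_smooth (hF : ContDiffOn ℝ (⊤:ℕ∞) F (Set.Ioi 0)) :
    ContDiffOn ℝ (⊤:ℕ∞) (fun σ => F σ ^ 2) (Set.Ioi 0) := hF.pow 2

lemma K_deriv (hF : ContDiffOn ℝ (⊤:ℕ∞) F (Set.Ioi 0)) {σ : ℝ} (hσ : 0 < σ) :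
    deriv (fun τ => F τ ^ 2) σ = 2 * F σ * deriv F σ := by
  have h := (show HasDerivAt (fun τ => F τ ^ 2) _ σ from (hasDerivAt_of_cd hF hσ).pow 2).deriv
  simpa using h

lemma K_deriv2 (hF : ContDiffOn ℝ (⊤:ℕ∞) F (Set.Ioi 0)) {σ : ℝ} (hσ : 0 < σ) :
    deriv (deriv (fun τ => F τ ^ 2)) σ = 2 * (deriv F σ ^ 2 + F σ * deriv (deriv F) σ) := by
  have hev : deriv (fun τ => F τ ^ 2) =ᶠ[nhds σ] fun τ => 2 * F τ * deriv F τ := by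
    filter_upwards [Ioi_mem_nhds hσ] with τ hτ
    exact K_deriv hF hτ
  rw [hev.deriv_eq]
  have hF' : HasDerivAt F (deriv F σ) σ := hasDerivAt_of_cd hF hσ
  have hF1' : HasDerivAt (deriv F) (deriv (deriv F) σ) σ := hasDerivAt_of_cd (derivsmooth hF) hσ
  have h := (show HasDerivAt (fun τ => 2 * F τ * deriv F τ) _ σ from (hF'.const_mul 2).mul hF1').deriv
  rw [h]
  ring

end Stmt16Aux

open Stmt16Aux


/-- Reduction to ODEs via the subalgebra `{X₁, X₂, X₃}`: if `F, G, M` solve the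
reduced ODE system on `(0,∞)`, then
`ψ = (1/y)·F(s)·exp(i G(s))`, `w = (1/y²)·M(s)` with `s = (x²+z²)/y²`
solves the Davey–Stewartson system on `{y > 0, x² + z² > 0}`. -/
theorem stmt16 (a₁ a₂ b₁ b₂ : ℝ) (ha₁ : a₁ ≠ 0) (ha₂ : a₂ ≠ 0) (hb₁ : b₁ ≠ 0) (hb₂ : b₂ ≠ 0)
    (F G M : ℝ → ℝ)
    (hF : ContDiffOn ℝ (⊤ : ℕ∞) F (Set.Ioi 0))
    (hG : ContDiffOn ℝ (⊤ : ℕ∞) G (Set.Ioi 0))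
    (hM : ContDiffOn ℝ (⊤ : ℕ∞) M (Set.Ioi 0))
    (hodeA : ∀ s : ℝ, 0 < s →
      4 * s * (1 + a₁ * s) * (deriv (deriv F) s - F s * deriv G s ^ 2)
        + 2 * (2 + 5 * a₁ * s) * deriv F s + 2 * a₁ * F s
      = a₂ * F s ^ 3 + M s * F s)
    (hodeB : ∀ s : ℝ, 0 < s →
      2 * s * (1 + a₁ * s) * F s * deriv (deriv G) s
        + 4 * s * (1 + a₁ * s) * deriv F s * deriv G s
        + (2 + 5 * a₁ * s) * F s * deriv G s = 0)
    (hodeC : ∀ s : ℝ, 0 < s →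
      s * (1 + b₁ * s) * deriv (deriv M) s + (1 + 7 / 2 * b₁ * s) * deriv M s
        + 3 / 2 * b₁ * M s
      = 2 * b₂ * s ^ 2 * (F s * deriv (deriv F) s + deriv F s ^ 2)
        + 7 * b₂ * s * F s * deriv F s + 3 / 2 * b₂ * F s ^ 2) :
    ∀ t x y z : ℝ, 0 < y → 0 < x ^ 2 + z ^ 2 →
      SolvesDSAt a₁ a₂ b₁ b₂
        (fun _t x y z => ((1 / y * F ((x ^ 2 + z ^ 2) / y ^ 2) : ℝ) : ℂ) *
          Complex.exp (Complex.I * ((G ((x ^ 2 + z ^ 2) / y ^ 2) : ℝ) : ℂ)))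
        (fun _t x y z => 1 / y ^ 2 * M ((x ^ 2 + z ^ 2) / y ^ 2))
        t x y z := by
  intro t x y z hy hxz
  have hyne : y ≠ 0 := ne_of_gt hy
  have hyC : (y : ℂ) ≠ 0 := by exact_mod_cast hyne
  unfold SolvesDSAt
  beta_reduce
  have hspos : 0 < (x ^ 2 + z ^ 2) / y ^ 2 := div_pos hxz (pow_pos hy 2)
  set s : ℝ := (x ^ 2 + z ^ 2) / y ^ 2 with hs_def
  have hc2 : x ^ 2 + z ^ 2 = s * y ^ 2 := by rw [hs_def]; field_simp
  have hH := Hc_smooth hF hG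
  -- eventual facts, x-direction
  have hposx : ∀ᶠ x' in nhds x, 0 < (x' ^ 2 + z ^ 2) / y ^ 2 := by
    have hc : ContinuousAt (fun x' : ℝ => (x' ^ 2 + z ^ 2) / y ^ 2) x := by fun_prop
    exact hc.eventually (eventually_gt_nhds hspos)
  have hux : ∀ x' : ℝ, HasDerivAt (fun x'' : ℝ => (x'' ^ 2 + z ^ 2) / y ^ 2)
      ((2 * x') / y ^ 2) x' := by
    intro x'
    simpa using ((hasDerivAt_pow 2 x').add_const (z ^ 2)).div_const (y ^ 2)
  have hU1x : HasDerivAt (fun x' : ℝ => (2 * x') / y ^ 2) (2 / y ^ 2) x := by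
    simpa using ((hasDerivAt_id x).const_mul 2).div_const (y ^ 2)
  -- eventual facts, z-direction
  have hposz : ∀ᶠ z' in nhds z, 0 < (x ^ 2 + z' ^ 2) / y ^ 2 := by
    have hc : ContinuousAt (fun z' : ℝ => (x ^ 2 + z' ^ 2) / y ^ 2) z := by fun_prop
    exact hc.eventually (eventually_gt_nhds hspos)
  have huz : ∀ z' : ℝ, HasDerivAt (fun z'' : ℝ => (x ^ 2 + z'' ^ 2) / y ^ 2)
      ((2 * z') / y ^ 2) z' := by
    intro z'
    simpa using (((hasDerivAt_pow 2 z').const_add (x ^ 2)).div_const (y ^ 2))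
  have hU1z : HasDerivAt (fun z' : ℝ => (2 * z') / y ^ 2) (2 / y ^ 2) z := by
    simpa using ((hasDerivAt_id z).const_mul 2).div_const (y ^ 2)
  -- eventual facts, y-direction
  have huy : ∀ᶠ y' in nhds y,
      HasDerivAt (fun y'' : ℝ => (x ^ 2 + z ^ 2) / y'' ^ 2)
        ((fun y'' : ℝ => -(2 * (x ^ 2 + z ^ 2)) / y'' ^ 3) y') y' ∧ 0 < y' := by
    filter_upwards [eventually_gt_nhds hy] with y' hy'
    exact ⟨hasDerivAt_div2 (x ^ 2 + z ^ 2) (ne_of_gt hy'), hy'⟩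
  have hU1y : HasDerivAt (fun y'' : ℝ => -(2 * (x ^ 2 + z ^ 2)) / y'' ^ 3)
      (-(3 * (-(2 * (x ^ 2 + z ^ 2)))) / y ^ 4) y := hasDerivAt_div3 _ hyne
  constructor
  · -- first DS equation
    have hfunx : (fun x' : ℝ => ((1 / y * F ((x' ^ 2 + z ^ 2) / y ^ 2) : ℝ) : ℂ) *
        Complex.exp (Complex.I * ((G ((x' ^ 2 + z ^ 2) / y ^ 2) : ℝ) : ℂ)))
        = fun x' : ℝ => (fun _ : ℝ => 1 / y) x' •
            (fun τ : ℝ => (F τ : ℂ) * Complex.exp (Complex.I * (G τ : ℂ)))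
              ((fun x'' : ℝ => (x'' ^ 2 + z ^ 2) / y ^ 2) x') := by
      funext x'
      simp only [Complex.real_smul]
      push_cast
      ring
    have hevx : ∀ᶠ x' in nhds x,
        HasDerivAt (fun x'' : ℝ => (x'' ^ 2 + z ^ 2) / y ^ 2)
          ((fun x'' : ℝ => (2 * x'') / y ^ 2) x') x' ∧
        HasDerivAt (fun _ : ℝ => 1 / y) ((fun _ : ℝ => (0:ℝ)) x') x' ∧
        0 < (x' ^ 2 + z ^ 2) / y ^ 2 := by
      filter_upwards [hposx] with x' hpos'
      exact ⟨hux x', hasDerivAt_const x' (1 / y), hpos'⟩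
    have DXX : deriv (deriv (fun x' : ℝ => ((1 / y * F ((x' ^ 2 + z ^ 2) / y ^ 2) : ℝ) : ℂ) *
          Complex.exp (Complex.I * ((G ((x' ^ 2 + z ^ 2) / y ^ 2) : ℝ) : ℂ)))) x
        = (0:ℝ) • ((F s : ℂ) * Complex.exp (Complex.I * (G s : ℂ)))
          + (2 * (0 * ((2 * x) / y ^ 2)) + 1 / y * (2 / y ^ 2)) •
              deriv (fun τ : ℝ => (F τ : ℂ) * Complex.exp (Complex.I * (G τ : ℂ))) s
          + (1 / y * (((2 * x) / y ^ 2) * ((2 * x) / y ^ 2))) •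
              deriv (deriv (fun τ : ℝ => (F τ : ℂ) * Complex.exp (Complex.I * (G τ : ℂ)))) s := by
      rw [hfunx]
      exact deriv2_comp hH (fun x'' : ℝ => (x'' ^ 2 + z ^ 2) / y ^ 2)
        (fun x'' : ℝ => (2 * x'') / y ^ 2) (fun _ : ℝ => 1 / y) (fun _ : ℝ => (0:ℝ))
        x (2 / y ^ 2) 0 hevx hU1x (hasDerivAt_const x 0)
    have hfunz : (fun z' : ℝ => ((1 / y * F ((x ^ 2 + z' ^ 2) / y ^ 2) : ℝ) : ℂ) *
        Complex.exp (Complex.I * ((G ((x ^ 2 + z' ^ 2) / y ^ 2) : ℝ) : ℂ)))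
        = fun z' : ℝ => (fun _ : ℝ => 1 / y) z' •
            (fun τ : ℝ => (F τ : ℂ) * Complex.exp (Complex.I * (G τ : ℂ)))
              ((fun z'' : ℝ => (x ^ 2 + z'' ^ 2) / y ^ 2) z') := by
      funext z'
      simp only [Complex.real_smul]
      push_cast
      ring
    have hevz : ∀ᶠ z' in nhds z,
        HasDerivAt (fun z'' : ℝ => (x ^ 2 + z'' ^ 2) / y ^ 2)
          ((fun z'' : ℝ => (2 * z'') / y ^ 2) z') z' ∧
        HasDerivAt (fun _ : ℝ => 1 / y) ((fun _ : ℝ => (0:ℝ)) z') z' ∧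
        0 < (x ^ 2 + z' ^ 2) / y ^ 2 := by
      filter_upwards [hposz] with z' hpos'
      exact ⟨huz z', hasDerivAt_const z' (1 / y), hpos'⟩
    have DZZ : deriv (deriv (fun z' : ℝ => ((1 / y * F ((x ^ 2 + z' ^ 2) / y ^ 2) : ℝ) : ℂ) *
          Complex.exp (Complex.I * ((G ((x ^ 2 + z' ^ 2) / y ^ 2) : ℝ) : ℂ)))) z
        = (0:ℝ) • ((F s : ℂ) * Complex.exp (Complex.I * (G s : ℂ)))
          + (2 * (0 * ((2 * z) / y ^ 2)) + 1 / y * (2 / y ^ 2)) •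
              deriv (fun τ : ℝ => (F τ : ℂ) * Complex.exp (Complex.I * (G τ : ℂ))) s
          + (1 / y * (((2 * z) / y ^ 2) * ((2 * z) / y ^ 2))) •
              deriv (deriv (fun τ : ℝ => (F τ : ℂ) * Complex.exp (Complex.I * (G τ : ℂ)))) s := by
      rw [hfunz]
      exact deriv2_comp hH (fun z'' : ℝ => (x ^ 2 + z'' ^ 2) / y ^ 2)
        (fun z'' : ℝ => (2 * z'') / y ^ 2) (fun _ : ℝ => 1 / y) (fun _ : ℝ => (0:ℝ))
        z (2 / y ^ 2) 0 hevz hU1z (hasDerivAt_const z 0)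
    have hfuny : (fun y' : ℝ => ((1 / y' * F ((x ^ 2 + z ^ 2) / y' ^ 2) : ℝ) : ℂ) *
        Complex.exp (Complex.I * ((G ((x ^ 2 + z ^ 2) / y' ^ 2) : ℝ) : ℂ)))
        = fun y' : ℝ => (fun y'' : ℝ => 1 / y'') y' •
            (fun τ : ℝ => (F τ : ℂ) * Complex.exp (Complex.I * (G τ : ℂ)))
              ((fun y'' : ℝ => (x ^ 2 + z ^ 2) / y'' ^ 2) y') := by
      funext y'
      simp only [Complex.real_smul]
      push_cast
      ring
    have hevy : ∀ᶠ y' in nhds y,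
        HasDerivAt (fun y'' : ℝ => (x ^ 2 + z ^ 2) / y'' ^ 2)
          ((fun y'' : ℝ => -(2 * (x ^ 2 + z ^ 2)) / y'' ^ 3) y') y' ∧
        HasDerivAt (fun y'' : ℝ => 1 / y'') ((fun y'' : ℝ => -(1:ℝ) / y'' ^ 2) y') y' ∧
        0 < (x ^ 2 + z ^ 2) / y' ^ 2 := by
      filter_upwards [huy] with y' hy'
      exact ⟨hy'.1, hasDerivAt_div1 1 (ne_of_gt hy'.2), div_pos hxz (pow_pos hy'.2 2)⟩
    have DYY : deriv (deriv (fun y' : ℝ => ((1 / y' * F ((x ^ 2 + z ^ 2) / y' ^ 2) : ℝ) : ℂ) *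
          Complex.exp (Complex.I * ((G ((x ^ 2 + z ^ 2) / y' ^ 2) : ℝ) : ℂ)))) y
        = (-(2 * (-(1:ℝ))) / y ^ 3) • ((F s : ℂ) * Complex.exp (Complex.I * (G s : ℂ)))
          + (2 * ((-(1:ℝ) / y ^ 2) * (-(2 * (x ^ 2 + z ^ 2)) / y ^ 3))
              + 1 / y * (-(3 * (-(2 * (x ^ 2 + z ^ 2)))) / y ^ 4)) •
              deriv (fun τ : ℝ => (F τ : ℂ) * Complex.exp (Complex.I * (G τ : ℂ))) s
          + (1 / y * ((-(2 * (x ^ 2 + z ^ 2)) / y ^ 3) * (-(2 * (x ^ 2 + z ^ 2)) / y ^ 3))) •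
              deriv (deriv (fun τ : ℝ => (F τ : ℂ) * Complex.exp (Complex.I * (G τ : ℂ)))) s := by
      rw [hfuny]
      exact deriv2_comp hH (fun y'' : ℝ => (x ^ 2 + z ^ 2) / y'' ^ 2)
        (fun y'' : ℝ => -(2 * (x ^ 2 + z ^ 2)) / y'' ^ 3) (fun y'' : ℝ => 1 / y'')
        (fun y'' : ℝ => -(1:ℝ) / y'' ^ 2) y (-(3 * (-(2 * (x ^ 2 + z ^ 2)))) / y ^ 4)
        (-(2 * (-(1:ℝ))) / y ^ 3) hevy hU1y (hasDerivAt_div2 (-(1:ℝ)) hyne)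
    have habs : ((‖((1 / y * F s : ℝ) : ℂ) *
        Complex.exp (Complex.I * ((G s : ℝ) : ℂ))‖ : ℝ) : ℂ) ^ 2
        = (((1 / y * F s) ^ 2 : ℝ) : ℂ) := by
      rw [← Complex.ofReal_pow, abs_sq_aux]
    rw [deriv_const, DXX, DYY, DZZ, Hc_deriv hF hG hspos, Hc_deriv2 hF hG hspos, habs]
    have hAC := congrArg (fun r : ℝ => (r : ℂ)) (hodeA s hspos)
    have hBC := congrArg (fun r : ℝ => (r : ℂ)) (hodeB s hspos)
    have hc2C := congrArg (fun r : ℝ => (r : ℂ)) hc2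
    push_cast at hAC hBC hc2C
    have h5 : ((x:ℂ) ^ 2 + (z:ℂ) ^ 2) / (y:ℂ) ^ 5 = (s:ℂ) / (y:ℂ) ^ 3 := by
      rw [div_eq_div_iff (pow_ne_zero _ hyC) (pow_ne_zero _ hyC)]
      linear_combination (y:ℂ) ^ 3 * hc2C
    have h7 : ((x:ℂ) ^ 2 + (z:ℂ) ^ 2) ^ 2 / (y:ℂ) ^ 7 = (s:ℂ) ^ 2 / (y:ℂ) ^ 3 := by
      rw [div_eq_div_iff (pow_ne_zero _ hyC) (pow_ne_zero _ hyC)]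
      linear_combination (((x:ℂ) ^ 2 + (z:ℂ) ^ 2 + (s:ℂ) * (y:ℂ) ^ 2) * (y:ℂ) ^ 3) * hc2C
    simp only [Complex.real_smul]
    push_cast
    linear_combination
        (Complex.exp (Complex.I * (G s : ℂ)) / (y:ℂ) ^ 3) * hAC
      + (2 * Complex.I * Complex.exp (Complex.I * (G s : ℂ)) / (y:ℂ) ^ 3) * hBC
      + ((4 * (((deriv (deriv F) s : ℝ) : ℂ) - (F s : ℂ) * ((deriv G s : ℝ) : ℂ) ^ 2
            + Complex.I * (2 * ((deriv F s : ℝ) : ℂ) * ((deriv G s : ℝ) : ℂ)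
              + (F s : ℂ) * ((deriv (deriv G) s : ℝ) : ℂ)))
          + 10 * (a₁ : ℂ) * (((deriv F s : ℝ) : ℂ)
            + Complex.I * (F s : ℂ) * ((deriv G s : ℝ) : ℂ)))
          * Complex.exp (Complex.I * (G s : ℂ))) * h5
      + (4 * (a₁ : ℂ) * (((deriv (deriv F) s : ℝ) : ℂ) - (F s : ℂ) * ((deriv G s : ℝ) : ℂ) ^ 2
            + Complex.I * (2 * ((deriv F s : ℝ) : ℂ) * ((deriv G s : ℝ) : ℂ)
              + (F s : ℂ) * ((deriv (deriv G) s : ℝ) : ℂ)))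
          * Complex.exp (Complex.I * (G s : ℂ))) * h7
  · -- second DS equation
    have hfunxw : (fun x' : ℝ => 1 / y ^ 2 * M ((x' ^ 2 + z ^ 2) / y ^ 2))
        = fun x' : ℝ => (fun _ : ℝ => 1 / y ^ 2) x' •
            M ((fun x'' : ℝ => (x'' ^ 2 + z ^ 2) / y ^ 2) x') := by
      funext x'
      simp [smul_eq_mul]
    have hevxw : ∀ᶠ x' in nhds x,
        HasDerivAt (fun x'' : ℝ => (x'' ^ 2 + z ^ 2) / y ^ 2)
          ((fun x'' : ℝ => (2 * x'') / y ^ 2) x') x' ∧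
        HasDerivAt (fun _ : ℝ => 1 / y ^ 2) ((fun _ : ℝ => (0:ℝ)) x') x' ∧
        0 < (x' ^ 2 + z ^ 2) / y ^ 2 := by
      filter_upwards [hposx] with x' hpos'
      exact ⟨hux x', hasDerivAt_const x' (1 / y ^ 2), hpos'⟩
    have DWXX : deriv (deriv (fun x' : ℝ => 1 / y ^ 2 * M ((x' ^ 2 + z ^ 2) / y ^ 2))) x
        = (0:ℝ) • M s
          + (2 * (0 * ((2 * x) / y ^ 2)) + 1 / y ^ 2 * (2 / y ^ 2)) • deriv M s
          + (1 / y ^ 2 * (((2 * x) / y ^ 2) * ((2 * x) / y ^ 2))) • deriv (deriv M) s := by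
      rw [hfunxw]
      exact deriv2_comp hM (fun x'' : ℝ => (x'' ^ 2 + z ^ 2) / y ^ 2)
        (fun x'' : ℝ => (2 * x'') / y ^ 2) (fun _ : ℝ => 1 / y ^ 2) (fun _ : ℝ => (0:ℝ))
        x (2 / y ^ 2) 0 hevxw hU1x (hasDerivAt_const x 0)
    have hfunzw : (fun z' : ℝ => 1 / y ^ 2 * M ((x ^ 2 + z' ^ 2) / y ^ 2))
        = fun z' : ℝ => (fun _ : ℝ => 1 / y ^ 2) z' •
            M ((fun z'' : ℝ => (x ^ 2 + z'' ^ 2) / y ^ 2) z') := by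
      funext z'
      simp [smul_eq_mul]
    have hevzw : ∀ᶠ z' in nhds z,
        HasDerivAt (fun z'' : ℝ => (x ^ 2 + z'' ^ 2) / y ^ 2)
          ((fun z'' : ℝ => (2 * z'') / y ^ 2) z') z' ∧
        HasDerivAt (fun _ : ℝ => 1 / y ^ 2) ((fun _ : ℝ => (0:ℝ)) z') z' ∧
        0 < (x ^ 2 + z' ^ 2) / y ^ 2 := by
      filter_upwards [hposz] with z' hpos'
      exact ⟨huz z', hasDerivAt_const z' (1 / y ^ 2), hpos'⟩
    have DWZZ : deriv (deriv (fun z' : ℝ => 1 / y ^ 2 * M ((x ^ 2 + z' ^ 2) / y ^ 2))) z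
        = (0:ℝ) • M s
          + (2 * (0 * ((2 * z) / y ^ 2)) + 1 / y ^ 2 * (2 / y ^ 2)) • deriv M s
          + (1 / y ^ 2 * (((2 * z) / y ^ 2) * ((2 * z) / y ^ 2))) • deriv (deriv M) s := by
      rw [hfunzw]
      exact deriv2_comp hM (fun z'' : ℝ => (x ^ 2 + z'' ^ 2) / y ^ 2)
        (fun z'' : ℝ => (2 * z'') / y ^ 2) (fun _ : ℝ => 1 / y ^ 2) (fun _ : ℝ => (0:ℝ))
        z (2 / y ^ 2) 0 hevzw hU1z (hasDerivAt_const z 0)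
    have hevyw : ∀ᶠ y' in nhds y,
        HasDerivAt (fun y'' : ℝ => (x ^ 2 + z ^ 2) / y'' ^ 2)
          ((fun y'' : ℝ => -(2 * (x ^ 2 + z ^ 2)) / y'' ^ 3) y') y' ∧
        HasDerivAt (fun y'' : ℝ => 1 / y'' ^ 2) ((fun y'' : ℝ => -(2 * 1) / y'' ^ 3) y') y' ∧
        0 < (x ^ 2 + z ^ 2) / y' ^ 2 := by
      filter_upwards [huy] with y' hy'
      exact ⟨hy'.1, hasDerivAt_div2 1 (ne_of_gt hy'.2), div_pos hxz (pow_pos hy'.2 2)⟩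
    have hA1w : HasDerivAt (fun y'' : ℝ => -(2 * 1) / y'' ^ 3) (-(3 * (-(2 * 1))) / y ^ 4) y :=
      hasDerivAt_div3 _ hyne
    have hfunyw : (fun y' : ℝ => 1 / y' ^ 2 * M ((x ^ 2 + z ^ 2) / y' ^ 2))
        = fun y' : ℝ => (fun y'' : ℝ => 1 / y'' ^ 2) y' •
            M ((fun y'' : ℝ => (x ^ 2 + z ^ 2) / y'' ^ 2) y') := by
      funext y'
      simp [smul_eq_mul]
    have DWYY : deriv (deriv (fun y' : ℝ => 1 / y' ^ 2 * M ((x ^ 2 + z ^ 2) / y' ^ 2))) y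
        = (-(3 * (-(2 * 1))) / y ^ 4) • M s
          + (2 * ((-(2 * 1) / y ^ 3) * (-(2 * (x ^ 2 + z ^ 2)) / y ^ 3))
              + 1 / y ^ 2 * (-(3 * (-(2 * (x ^ 2 + z ^ 2)))) / y ^ 4)) • deriv M s
          + (1 / y ^ 2 * ((-(2 * (x ^ 2 + z ^ 2)) / y ^ 3) * (-(2 * (x ^ 2 + z ^ 2)) / y ^ 3))) •
              deriv (deriv M) s := by
      rw [hfunyw]
      exact deriv2_comp hM (fun y'' : ℝ => (x ^ 2 + z ^ 2) / y'' ^ 2)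
        (fun y'' : ℝ => -(2 * (x ^ 2 + z ^ 2)) / y'' ^ 3) (fun y'' : ℝ => 1 / y'' ^ 2)
        (fun y'' : ℝ => -(2 * 1) / y'' ^ 3) y (-(3 * (-(2 * (x ^ 2 + z ^ 2)))) / y ^ 4)
        (-(3 * (-(2 * 1))) / y ^ 4) hevyw hU1y hA1w
    have hKs := K_smooth hF
    have hfunyk : (fun y' : ℝ => ‖((1 / y' * F ((x ^ 2 + z ^ 2) / y' ^ 2) : ℝ) : ℂ) *
          Complex.exp (Complex.I * ((G ((x ^ 2 + z ^ 2) / y' ^ 2) : ℝ) : ℂ))‖ ^ 2)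
        = fun y' : ℝ => (fun y'' : ℝ => 1 / y'' ^ 2) y' •
            (fun τ : ℝ => F τ ^ 2) ((fun y'' : ℝ => (x ^ 2 + z ^ 2) / y'' ^ 2) y') := by
      funext y'
      rw [abs_sq_aux]
      simp only [smul_eq_mul]
      ring
    have DKYY : deriv (deriv (fun y' : ℝ =>
          ‖((1 / y' * F ((x ^ 2 + z ^ 2) / y' ^ 2) : ℝ) : ℂ) *
            Complex.exp (Complex.I * ((G ((x ^ 2 + z ^ 2) / y' ^ 2) : ℝ) : ℂ))‖ ^ 2)) y
        = (-(3 * (-(2 * 1))) / y ^ 4) • (fun τ : ℝ => F τ ^ 2) s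
          + (2 * ((-(2 * 1) / y ^ 3) * (-(2 * (x ^ 2 + z ^ 2)) / y ^ 3))
              + 1 / y ^ 2 * (-(3 * (-(2 * (x ^ 2 + z ^ 2)))) / y ^ 4)) •
              deriv (fun τ : ℝ => F τ ^ 2) s
          + (1 / y ^ 2 * ((-(2 * (x ^ 2 + z ^ 2)) / y ^ 3) * (-(2 * (x ^ 2 + z ^ 2)) / y ^ 3))) •
              deriv (deriv (fun τ : ℝ => F τ ^ 2)) s := by
      rw [hfunyk]
      exact deriv2_comp hKs (fun y'' : ℝ => (x ^ 2 + z ^ 2) / y'' ^ 2)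
        (fun y'' : ℝ => -(2 * (x ^ 2 + z ^ 2)) / y'' ^ 3) (fun y'' : ℝ => 1 / y'' ^ 2)
        (fun y'' : ℝ => -(2 * 1) / y'' ^ 3) y (-(3 * (-(2 * (x ^ 2 + z ^ 2)))) / y ^ 4)
        (-(3 * (-(2 * 1))) / y ^ 4) hevyw hU1y hA1w
    rw [DWXX, DWZZ, DWYY, DKYY, K_deriv hF hspos, K_deriv2 hF hspos]
    simp only [smul_eq_mul]
    have hC := hodeC s hspos
    have h6 : (x ^ 2 + z ^ 2) / y ^ 6 = s / y ^ 4 := by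
      rw [div_eq_div_iff (pow_ne_zero _ hyne) (pow_ne_zero _ hyne)]
      linear_combination y ^ 4 * hc2
    have h8 : (x ^ 2 + z ^ 2) ^ 2 / y ^ 8 = s ^ 2 / y ^ 4 := by
      rw [div_eq_div_iff (pow_ne_zero _ hyne) (pow_ne_zero _ hyne)]
      linear_combination ((x ^ 2 + z ^ 2 + s * y ^ 2) * y ^ 4) * hc2
    linear_combination (4 / y ^ 4) * hC
      + (4 * deriv (deriv M) s + 14 * b₁ * deriv M s
          - 14 * b₂ * (2 * F s * deriv F s)) * h6
      + (4 * b₁ * deriv (deriv M) s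
          - 4 * b₂ * (2 * (deriv F s ^ 2 + F s * deriv (deriv F) s))) * h8


end
end

section
/- (First integral of the reduced angular equation.) Let a₁ be a nonzero real constant and let I ⊆ (0,∞) be an open interval on which 1 + a₁s > 0. Let F, G : I → ℝ be smooth and satisfy, for all s ∈ I, 2s(1+a₁s)F(s)G''(s) + 4s(1+a₁s)F'(s)G'(s) + (2+5a₁s)F(s)G'(s) = 0. Then the function s ↦ s·(1+a₁s)^{3/2}·F(s)²·G'(s) has vanishing derivative on I; in particular it is constant on I. -/
/-!
With `u = 1 + a₁ s` and weight `w(s) = s u^{3/2}`, one has `w' = (2 + 5 a₁ s) u^{1/2} / 2` and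
`w = s u · u^{1/2}`. Hence `(w F² G')' = F (w F G'' + 2 w F' G' + w' F G')` is `F u^{1/2} / 2` times
the left-hand side of the equation, so it vanishes, and `w F² G'` is constant on the interval.
-/

theorem HasDerivAt.mul_sq_mul {w F g : ℝ → ℝ} {w' F' g' s : ℝ} (hw : HasDerivAt w w' s)
    (hF : HasDerivAt F F' s) (hg : HasDerivAt g g' s) :
    HasDerivAt (fun x => w x * F x ^ 2 * g x)
      (F s * (w s * F s * g' + 2 * w s * F' * g s + w' * F s * g s)) s := by
  refine ((hw.mul (hF.pow 2)).mul hg).congr_deriv ?_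
  simp only [Pi.mul_apply, Pi.pow_apply, Nat.cast_ofNat]
  ring

theorem hasDerivAt_mul_one_add_mul_rpow_three_halves {a₁ s : ℝ} (hs : 0 < 1 + a₁ * s) :
    HasDerivAt (fun x => x * (1 + a₁ * x) ^ ((3 : ℝ) / 2))
      ((2 + 5 * a₁ * s) / 2 * (1 + a₁ * s) ^ ((1 : ℝ) / 2)) s := by
  have hu : HasDerivAt (fun x => 1 + a₁ * x) a₁ s := by
    simpa using ((hasDerivAt_id s).const_mul a₁).const_add 1
  refine ((hasDerivAt_id s).mul (hu.rpow_const (p := 3 / 2) (Or.inl hs.ne'))).congr_deriv ?_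
  rw [show (3 : ℝ) / 2 - 1 = 1 / 2 by norm_num, show (3 : ℝ) / 2 = 1 + 1 / 2 by norm_num,
    Real.rpow_one_add' hs.le (by norm_num)]
  simp only [id]
  ring

theorem firstIntegral_hasDerivAt_zero {a₁ s : ℝ} {F G : ℝ → ℝ} (hs : 0 < 1 + a₁ * s)
    (hF : DifferentiableAt ℝ F s) (hG' : DifferentiableAt ℝ (deriv G) s)
    (hode : 2 * s * (1 + a₁ * s) * F s * deriv (deriv G) s
        + 4 * s * (1 + a₁ * s) * deriv F s * deriv G s
        + (2 + 5 * a₁ * s) * F s * deriv G s = 0) :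
    HasDerivAt (fun x => x * (1 + a₁ * x) ^ ((3 : ℝ) / 2) * F x ^ 2 * deriv G x) 0 s := by
  refine ((hasDerivAt_mul_one_add_mul_rpow_three_halves hs).mul_sq_mul hF.hasDerivAt
    hG'.hasDerivAt).congr_deriv ?_
  rw [show (3 : ℝ) / 2 = 1 + 1 / 2 by norm_num, Real.rpow_one_add' hs.le (by norm_num)]
  linear_combination ((1 + a₁ * s) ^ ((1 : ℝ) / 2) * F s / 2) * hode

theorem stmt17_general (a₁ : ℝ) (a b : ℝ)
    (hpos : ∀ s ∈ Set.Ioo a b, 0 < 1 + a₁ * s)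
    (F G : ℝ → ℝ)
    (hF : ContDiffOn ℝ (⊤ : ℕ∞) F (Set.Ioo a b))
    (hG : ContDiffOn ℝ (⊤ : ℕ∞) G (Set.Ioo a b))
    (hode : ∀ s ∈ Set.Ioo a b,
      2 * s * (1 + a₁ * s) * F s * deriv (deriv G) s
        + 4 * s * (1 + a₁ * s) * deriv F s * deriv G s
        + (2 + 5 * a₁ * s) * F s * deriv G s = 0) :
    (∀ s ∈ Set.Ioo a b,
      deriv (fun s' => s' * (1 + a₁ * s') ^ ((3 : ℝ) / 2) * F s' ^ 2 * deriv G s') s = 0) ∧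
    ∃ C : ℝ, ∀ s ∈ Set.Ioo a b,
      s * (1 + a₁ * s) ^ ((3 : ℝ) / 2) * F s ^ 2 * deriv G s = C := by
  have hG' : ContDiffOn ℝ (⊤ : ℕ∞) (deriv G) (Set.Ioo a b) :=
    hG.deriv_of_isOpen isOpen_Ioo (by norm_num)
  have hderiv (s : ℝ) (hs : s ∈ Set.Ioo a b) :
      HasDerivAt (fun s' => s' * (1 + a₁ * s') ^ ((3 : ℝ) / 2) * F s' ^ 2 * deriv G s') 0 s := by
    have hI := isOpen_Ioo.mem_nhds hs
    exact firstIntegral_hasDerivAt_zero (hpos s hs)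
      ((hF.contDiffAt hI).differentiableAt (by simp))
      ((hG'.contDiffAt hI).differentiableAt (by simp)) (hode s hs)
  exact ⟨fun s hs => (hderiv s hs).deriv,
    isOpen_Ioo.exists_is_const_of_deriv_eq_zero isPreconnected_Ioo
      (fun s hs => (hderiv s hs).differentiableAt.differentiableWithinAt)
      (fun s hs => (hderiv s hs).deriv)⟩

/-- First integral of the reduced angular equation: on an open interval
`I = (a,b) ⊆ (0,∞)` where `1 + a₁s > 0`, equation (b) of the reduced ODE system implies
that `s·(1+a₁s)^{3/2}·F(s)²·G'(s)` has vanishing derivative, hence is constant. -/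
theorem stmt17 (a₁ : ℝ) (ha₁ : a₁ ≠ 0) (a b : ℝ)
    (hIpos : Set.Ioo a b ⊆ Set.Ioi (0 : ℝ))
    (hpos : ∀ s ∈ Set.Ioo a b, 0 < 1 + a₁ * s)
    (F G : ℝ → ℝ)
    (hF : ContDiffOn ℝ (⊤ : ℕ∞) F (Set.Ioo a b))
    (hG : ContDiffOn ℝ (⊤ : ℕ∞) G (Set.Ioo a b))
    (hode : ∀ s ∈ Set.Ioo a b,
      2 * s * (1 + a₁ * s) * F s * deriv (deriv G) s
        + 4 * s * (1 + a₁ * s) * deriv F s * deriv G s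
        + (2 + 5 * a₁ * s) * F s * deriv G s = 0) :
    (∀ s ∈ Set.Ioo a b,
      deriv (fun s' => s' * (1 + a₁ * s') ^ ((3 : ℝ) / 2) * F s' ^ 2 * deriv G s') s = 0) ∧
    ∃ C : ℝ, ∀ s ∈ Set.Ioo a b,
      s * (1 + a₁ * s) ^ ((3 : ℝ) / 2) * F s ^ 2 * deriv G s = C :=
  stmt17_general a₁ a b hpos F G hF hG hode
end
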